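/- (Remark 2(iii)) For fixed α ∈ (0,1), irrespective of the relation between q and b/(a+b), the RDC H_q minimizes L_{a,b} among all RDCs with predicted positive rate exactly α: for all a, b ≥ 0 with a + b > 0, every (1−α)-quantile q of η, and every RDC H with E[H] = α, L_{a,b}(H_q) ≤ L_{a,b}(H). -/

import Mathlib

open MeasureTheory Set

/-- A randomized decision classifier (RDC): an `ℋ`-measurable random variable
with values in the unit interval. -/
def IsRDC {Ω : Type*} (ℋ : MeasurableSpace Ω) (H : Ω → ℝ) : Prop :=
  Measurable[ℋ] H ∧ ∀ ω, H ω ∈ Set.Icc (0 : ℝ) 1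

/-- The optimal RDC `H_q` obtained by thresholding the posterior probability `η` at `q`,
with randomization on the event `{η = q}` calibrated so that the predicted positive
rate equals `α`. -/
noncomputable def Hq {Ω : Type*} [MeasurableSpace Ω] (P : Measure Ω) (η : Ω → ℝ)
    (α q : ℝ) : Ω → ℝ := fun ω =>
  if P {ω' | η ω' = q} = 0 then {ω' | η ω' > q}.indicator (fun _ => (1 : ℝ)) ω
  else {ω' | η ω' > q}.indicator (fun _ => (1 : ℝ)) ω +
    ((α - (P {ω' | η ω' > q}).toReal) / (P {ω' | η ω' = q}).toReal) *
      {ω' | η ω' = q}.indicator (fun _ => (1 : ℝ)) ω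

/-- Expected misclassification cost `L_{a,b}(H) = a·E[(1−H)·1_A] + b·E[H·1_{Aᶜ}]`. -/
noncomputable def cost {Ω : Type*} [MeasurableSpace Ω] (P : Measure Ω) (A : Set Ω)
    (a b : ℝ) (H : Ω → ℝ) : ℝ :=
  a * ∫ ω, (1 - H ω) * A.indicator (fun _ => (1 : ℝ)) ω ∂P +
    b * ∫ ω, H ω * Aᶜ.indicator (fun _ => (1 : ℝ)) ω ∂P

/-! For a bounded `ℋ`-measurable `G`, the defining property of `η` gives
`E[G 1_A] = E[η G]`, hence `L_{a,b}(G) = a P(A) + b E[G] - (a + b) E[η G]`: among RDCs of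
mean `α` it suffices to maximize `E[η G]`. This is the Neyman–Pearson argument: `H_q` is `1`
above `q` and `0` below it, so `(η - q) (H_q - H) ≥ 0` pointwise, and integrating with
`E[H_q] = E[H] = α` gives `E[η H] ≤ E[η H_q]`. -/

section Threshold

variable {Ω : Type*} {ℋ : MeasurableSpace Ω} [MeasurableSpace Ω] {P : Measure Ω} {η : Ω → ℝ}
  {α q : ℝ}

/-- When `P {η = q} = 0` the coefficient below is a division by `0`, hence `0` in Lean,
so a single formula covers both branches of `Hq`. -/
lemma Hq_eq_indicator_add :
    Hq P η α q = fun ω => {ω' | η ω' > q}.indicator (fun _ => 1) ω +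
      ((α - P.real {ω' | η ω' > q}) / P.real {ω' | η ω' = q}) *
        {ω' | η ω' = q}.indicator (fun _ => 1) ω := by
  funext ω
  unfold Hq
  split_ifs with h <;> simp [Measure.real, h]

lemma Hq_of_gt {ω : Ω} (h : q < η ω) : Hq P η α q ω = 1 := by
  simp [Hq_eq_indicator_add, h, h.ne']

lemma Hq_of_lt {ω : Ω} (h : η ω < q) : Hq P η α q ω = 0 := by
  simp [Hq_eq_indicator_add, h.not_gt, h.ne]

lemma measurable_Hq (hη : Measurable[ℋ] η) : Measurable[ℋ] (Hq P η α q) := by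
  have hgt : MeasurableSet[ℋ] {ω | η ω > q} := hη measurableSet_Ioi
  have heq : MeasurableSet[ℋ] {ω | η ω = q} := hη (measurableSet_singleton q)
  rw [Hq_eq_indicator_add]
  exact (measurable_const.indicator hgt).add ((measurable_const.indicator heq).const_mul _)

lemma exists_abs_Hq_le : ∃ C, ∀ ω, |Hq P η α q ω| ≤ C := by
  refine ⟨1 + |(α - P.real {ω' | η ω' > q}) / P.real {ω' | η ω' = q}|, fun ω => ?_⟩
  rw [Hq_eq_indicator_add]
  refine (abs_add_le _ _).trans (add_le_add ?_ ?_)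
  · by_cases h : q < η ω <;> simp [h]
  · rw [abs_mul]
    refine mul_le_of_le_one_right (abs_nonneg _) ?_
    by_cases h : η ω = q <;> simp [h]

lemma integral_Hq [IsProbabilityMeasure P] (hη : Measurable η)
    (hq_lt : P.real {ω | η ω < q} ≤ 1 - α) (hq_le : 1 - α ≤ P.real {ω | η ω ≤ q}) :
    ∫ ω, Hq P η α q ω ∂P = α := by
  have hgt : MeasurableSet {ω | η ω > q} := hη measurableSet_Ioi
  have heq : MeasurableSet {ω | η ω = q} := hη (measurableSet_singleton q)
  have hle_split : P.real {ω | η ω ≤ q} = P.real {ω | η ω < q} + P.real {ω | η ω = q} := by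
    have hunion : {ω | η ω ≤ q} = {ω | η ω < q} ∪ {ω | η ω = q} := by
      ext ω
      exact le_iff_lt_or_eq (a := η ω)
    have hdisj : Disjoint {ω | η ω < q} {ω | η ω = q} :=
      disjoint_left.2 fun _ hlt heq => ne_of_lt hlt heq
    rw [hunion, measureReal_union hdisj heq]
  have hgt_compl : P.real {ω | η ω > q} = 1 - P.real {ω | η ω ≤ q} := by
    rw [← probReal_compl_eq_one_sub (s := {ω | η ω ≤ q}) (hη measurableSet_Iic)]
    congr 1
    ext ω
    simp
  rw [Hq_eq_indicator_add, integral_add ((integrable_const 1).indicator hgt)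
      (((integrable_const 1).indicator heq).const_mul _), integral_const_mul,
    integral_indicator_const 1 hgt, integral_indicator_const 1 heq, smul_eq_mul, smul_eq_mul,
    mul_one, mul_one]
  rcases eq_or_ne (P.real {ω | η ω = q}) 0 with h0 | h0
  · rw [h0, mul_zero, add_zero]
    linarith
  · rw [div_mul_cancel₀ _ h0]
    ring

end Threshold

section Cost

variable {Ω : Type*} [MeasurableSpace Ω] {P : Measure Ω}

lemma integrable_of_abs_le [IsFiniteMeasure P] {f : Ω → ℝ} (hf : Measurable f) {C : ℝ}
    (hC : ∀ ω, |f ω| ≤ C) : Integrable f P :=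
  .of_bound hf.aestronglyMeasurable C (ae_of_all _ hC)

lemma integral_mul_le_integral_mul_of_threshold {η T H : Ω → ℝ} (q : ℝ)
    (hT_gt : ∀ ω, q < η ω → T ω = 1) (hT_lt : ∀ ω, η ω < q → T ω = 0)
    (hH : ∀ ω, H ω ∈ Icc (0 : ℝ) 1) (hT_int : Integrable T P) (hH_int : Integrable H P)
    (hηT : Integrable (fun ω => η ω * T ω) P) (hηH : Integrable (fun ω => η ω * H ω) P)
    (h_mean : ∫ ω, T ω ∂P = ∫ ω, H ω ∂P) :
    ∫ ω, η ω * H ω ∂P ≤ ∫ ω, η ω * T ω ∂P := by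
  have hpointwise : ∀ ω, η ω * H ω - q * H ω ≤ η ω * T ω - q * T ω := by
    intro ω
    rcases lt_trichotomy (η ω) q with h | h | h
    · rw [hT_lt ω h]
      nlinarith [(hH ω).1]
    · simp [h]
    · rw [hT_gt ω h]
      nlinarith [(hH ω).2]
  have := integral_mono (hηH.sub (hH_int.const_mul q)) (hηT.sub (hT_int.const_mul q)) hpointwise
  simp only [Pi.sub_apply] at this
  rw [integral_sub hηH (hH_int.const_mul q), integral_sub hηT (hT_int.const_mul q),
    integral_const_mul, integral_const_mul, h_mean] at this
  linarith

lemma cost_eq [IsFiniteMeasure P] {A : Set Ω} (hA : MeasurableSet A) (a b : ℝ) {G : Ω → ℝ}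
    (hG : Integrable G P) :
    cost P A a b G = a * P.real A + b * ∫ ω, G ω ∂P -
      (a + b) * ∫ ω, A.indicator (fun _ => (1 : ℝ)) ω * G ω ∂P := by
  have hGA : Integrable (fun ω => A.indicator (fun _ => (1 : ℝ)) ω * G ω) P := by
    simpa [← indicator_mul_left] using hG.indicator hA
  have hA_int : Integrable (A.indicator (fun _ => (1 : ℝ))) P :=
    (integrable_const 1).indicator hA
  have hcompl : ∀ ω, G ω * Aᶜ.indicator (fun _ => (1 : ℝ)) ω =
      G ω - A.indicator (fun _ => (1 : ℝ)) ω * G ω := by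
    intro ω
    by_cases h : ω ∈ A <;> simp [h]
  unfold cost
  simp_rw [sub_mul, one_mul, hcompl]
  rw [integral_sub hA_int (by simpa only [mul_comm] using hGA), integral_sub hG hGA,
    integral_indicator_const 1 hA, smul_eq_mul, mul_one]
  simp_rw [mul_comm (G _)]
  ring

end Cost

lemma cost_eq_of_condProb {Ω : Type*} (ℋ : MeasurableSpace Ω) [𝒜 : MeasurableSpace Ω]
    {P : Measure Ω} [IsFiniteMeasure P] (hℋ : ℋ ≤ 𝒜) {A : Set Ω} (hA : MeasurableSet A)
    {η : Ω → ℝ} (hηcond : ∀ Z : Ω → ℝ, Measurable[ℋ] Z → (∃ C, ∀ ω, |Z ω| ≤ C) →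
      ∫ ω, η ω * Z ω ∂P = ∫ ω, A.indicator (fun _ => (1 : ℝ)) ω * Z ω ∂P)
    (a b : ℝ) {G : Ω → ℝ} (hG : Measurable[ℋ] G) (hG_bdd : ∃ C, ∀ ω, |G ω| ≤ C) :
    cost P A a b G = a * P.real A + b * ∫ ω, G ω ∂P - (a + b) * ∫ ω, η ω * G ω ∂P := by
  obtain ⟨C, hC⟩ := hG_bdd
  rw [cost_eq hA a b (integrable_of_abs_le (hG.mono hℋ le_rfl) hC), hηcond G hG ⟨C, hC⟩]

theorem Hq_min_cost_of_rate_eq_general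
    {Ω : Type*} (ℋ : MeasurableSpace Ω) [𝒜 : MeasurableSpace Ω]
    (P : Measure Ω) [IsProbabilityMeasure P] (hℋ : ℋ ≤ 𝒜)
    (A : Set Ω) (hA : MeasurableSet A)
    (η : Ω → ℝ) (hηm : Measurable[ℋ] η) (hη01 : ∀ ω, η ω ∈ Set.Icc (0 : ℝ) 1)
    (hηcond : ∀ Z : Ω → ℝ, Measurable[ℋ] Z → (∃ C, ∀ ω, |Z ω| ≤ C) →
      ∫ ω, η ω * Z ω ∂P = ∫ ω, A.indicator (fun _ => (1 : ℝ)) ω * Z ω ∂P)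
    (α : ℝ)
 :
    ∀ a b : ℝ, 0 ≤ a → 0 ≤ b → 0 < a + b →
      ∀ q : ℝ, (P {ω | η ω < q}).toReal ≤ 1 - α → 1 - α ≤ (P {ω | η ω ≤ q}).toReal →
        ∀ H : Ω → ℝ, IsRDC ℋ H → ∫ ω, H ω ∂P = α →
          cost P A a b (Hq P η α q) ≤ cost P A a b H := by
  intro a b _ _ hab q hq_lt hq_le H ⟨hHm, hH01⟩ hH_mean
  have hH_bdd : ∀ ω, |H ω| ≤ 1 := fun ω => abs_le.2 ⟨by linarith [(hH01 ω).1], (hH01 ω).2⟩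
  have hη_bdd : ∀ᵐ ω ∂P, ‖η ω‖ ≤ 1 := ae_of_all _ fun ω =>
    abs_le.2 ⟨by linarith [(hη01 ω).1], (hη01 ω).2⟩
  have hηM : Measurable η := hηm.mono hℋ le_rfl
  obtain ⟨C, hC⟩ := exists_abs_Hq_le (P := P) (η := η) (α := α) (q := q)
  have hHq_int : Integrable (Hq P η α q) P :=
    integrable_of_abs_le ((measurable_Hq hηm).mono hℋ le_rfl) hC
  have hH_int : Integrable H P := integrable_of_abs_le (hHm.mono hℋ le_rfl) hH_bdd
  have hHq_mean : ∫ ω, Hq P η α q ω ∂P = α := integral_Hq hηM hq_lt hq_le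
  have hkey : ∫ ω, η ω * H ω ∂P ≤ ∫ ω, η ω * Hq P η α q ω ∂P :=
    integral_mul_le_integral_mul_of_threshold q (fun _ => Hq_of_gt) (fun _ => Hq_of_lt) hH01
      hHq_int hH_int (hHq_int.bdd_mul hηM.aestronglyMeasurable hη_bdd)
      (hH_int.bdd_mul hηM.aestronglyMeasurable hη_bdd) (hHq_mean.trans hH_mean.symm)
  rw [cost_eq_of_condProb ℋ hℋ hA hηcond a b (measurable_Hq hηm) ⟨C, hC⟩,
    cost_eq_of_condProb ℋ hℋ hA hηcond a b hHm ⟨1, hH_bdd⟩, hHq_mean, hH_mean]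
  linarith [mul_le_mul_of_nonneg_left hkey hab.le]

/-- Remark 2(iii). For fixed `α ∈ (0,1)`, for all `a, b ≥ 0` with
`a + b > 0` and every `(1−α)`-quantile `q` of `η`, the RDC `H_q` minimizes `L_{a,b}` among
all RDCs with predicted positive rate exactly `α`. -/
theorem Hq_min_cost_of_rate_eq
    {Ω : Type*} (ℋ : MeasurableSpace Ω) [𝒜 : MeasurableSpace Ω]
    (P : Measure Ω) [IsProbabilityMeasure P] (hℋ : ℋ ≤ 𝒜)
    (A : Set Ω) (hA : MeasurableSet A) (hA0 : 0 < P A) (hA1 : P A < 1)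
    (hAH : ¬ MeasurableSet[ℋ] A)
    (η : Ω → ℝ) (hηm : Measurable[ℋ] η) (hη01 : ∀ ω, η ω ∈ Set.Icc (0 : ℝ) 1)
    (hηcond : ∀ Z : Ω → ℝ, Measurable[ℋ] Z → (∃ C, ∀ ω, |Z ω| ≤ C) →
      ∫ ω, η ω * Z ω ∂P = ∫ ω, A.indicator (fun _ => (1 : ℝ)) ω * Z ω ∂P)
    (α : ℝ) (hα : α ∈ Set.Ioo (0 : ℝ) 1)
 :
    ∀ a b : ℝ, 0 ≤ a → 0 ≤ b → 0 < a + b →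
      ∀ q : ℝ, (P {ω | η ω < q}).toReal ≤ 1 - α → 1 - α ≤ (P {ω | η ω ≤ q}).toReal →
        ∀ H : Ω → ℝ, IsRDC ℋ H → ∫ ω, H ω ∂P = α →
          cost P A a b (Hq P η α q) ≤ cost P A a b H :=
  Hq_min_cost_of_rate_eq_general ℋ (𝒜 := 𝒜) P hℋ A hA η hηm hη01 hηcond α
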